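/- arXiv:1504.03215 — 2 statements merged into one kernel-verified Lean document; each statement's English description precedes it below -/
import Mathlib

section
/- For any unit vector ω ∈ ℝ³, the hard-sphere collision map C_ω preserves the Lebesgue measure on ℝ³ × ℝ³ ≅ ℝ⁶: the pushforward of the Lebesgue (volume) measure under C_ω equals the Lebesgue measure. -/
/-!
`C_ω` is linear, and for a unit vector `ω` it is an involution: it flips the sign of
`⟪ω, v - v₁⟫`. An involutive linear map has determinant `±1`, so it preserves every
Haar measure.
-/

open scoped RealInnerProductSpace
open MeasureTheory

/-- The hard-sphere collision map `C_ω` on pairs of velocities. -/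
noncomputable def collisionMap (ω : EuclideanSpace ℝ (Fin 3)) :
    EuclideanSpace ℝ (Fin 3) × EuclideanSpace ℝ (Fin 3) →
      EuclideanSpace ℝ (Fin 3) × EuclideanSpace ℝ (Fin 3) :=
  fun p => (p.1 - ⟪ω, p.1 - p.2⟫ • ω, p.2 + ⟪ω, p.1 - p.2⟫ • ω)

theorem LinearMap.abs_det_eq_one_of_involutive {K M : Type*} [Field K] [LinearOrder K]
    [IsStrictOrderedRing K] [AddCommGroup M] [Module K M] {f : M →ₗ[K] M}
    (hf : Function.Involutive f) : |LinearMap.det f| = 1 := by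
  have hdet : LinearMap.det f * LinearMap.det f = 1 := by
    rw [← LinearMap.det_comp, show f ∘ₗ f = LinearMap.id from LinearMap.ext hf, LinearMap.det_id]
  rcases mul_self_eq_one_iff.mp hdet with h | h <;> simp [h]

theorem LinearMap.map_addHaar_eq_self_of_involutive {E : Type*} [NormedAddCommGroup E]
    [NormedSpace ℝ E] [MeasurableSpace E] [BorelSpace E] [FiniteDimensional ℝ E]
    (μ : Measure E) [μ.IsAddHaarMeasure] {f : E →ₗ[ℝ] E} (hf : Function.Involutive f) :
    μ.map f = μ := by
  have habs := LinearMap.abs_det_eq_one_of_involutive hf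
  rw [Measure.map_linearMap_addHaar_eq_smul_addHaar μ (by simp [← abs_ne_zero, habs]), abs_inv,
    habs, inv_one, ENNReal.ofReal_one, one_smul]

section Collision

variable {E : Type*} [NormedAddCommGroup E] [InnerProductSpace ℝ E]

noncomputable def collisionLinearMap (ω : E) : E × E →ₗ[ℝ] E × E :=
  LinearMap.id - LinearMap.toSpanSingleton ℝ _ (ω, -ω) ∘ₗ
    innerₛₗ ℝ ω ∘ₗ (LinearMap.fst ℝ E E - LinearMap.snd ℝ E E)

theorem collisionLinearMap_apply (ω : E) (p : E × E) :
    collisionLinearMap ω p = (p.1 - ⟪ω, p.1 - p.2⟫ • ω, p.2 + ⟪ω, p.1 - p.2⟫ • ω) := by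
  ext <;> simp [collisionLinearMap, sub_eq_add_neg]

theorem inner_sub_collisionLinearMap (ω : E) (hω : ‖ω‖ = 1) (p : E × E) :
    ⟪ω, (collisionLinearMap ω p).1 - (collisionLinearMap ω p).2⟫ = -⟪ω, p.1 - p.2⟫ := by
  simp only [collisionLinearMap_apply, inner_sub_right, inner_add_right, inner_smul_right,
    real_inner_self_eq_norm_sq, hω]
  ring

theorem collisionLinearMap_involutive (ω : E) (hω : ‖ω‖ = 1) :
    Function.Involutive (collisionLinearMap ω) := by
  intro p
  rw [collisionLinearMap_apply _ (collisionLinearMap ω p), inner_sub_collisionLinearMap ω hω,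
    collisionLinearMap_apply]
  ext <;> simp

end Collision

/-- The hard-sphere collision map preserves the Lebesgue measure on `ℝ³ × ℝ³ ≅ ℝ⁶`:
the pushforward of the Lebesgue measure under `C_ω` is the Lebesgue measure. -/
theorem collisionMap_measurePreserving (ω : EuclideanSpace ℝ (Fin 3)) (hω : ‖ω‖ = 1) :
    Measure.map (collisionMap ω)
        (volume : Measure (EuclideanSpace ℝ (Fin 3) × EuclideanSpace ℝ (Fin 3)))
      = volume := by
  have hlin : collisionMap ω = collisionLinearMap ω :=
    funext fun p => (collisionLinearMap_apply ω p).symm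
  rw [hlin, Measure.volume_eq_prod]
  exact LinearMap.map_addHaar_eq_self_of_involutive _ (collisionLinearMap_involutive ω hω)
end

section
/- Let V ∈ ℝ³ with V ≠ 0, let ε > 0 and T > 0, and let S²₊ = {ω ∈ S² : ω·V > 0}, where S² is the unit sphere of ℝ³. Then the map Φ : (0, T) × S²₊ → ℝ³ defined by Φ(t, ω) = εω + tV is injective, and the pushforward under Φ of the measure ε²(ω·V) dt dσ(ω) (dt Lebesgue on (0,T), dσ the surface measure on S²) equals the Lebesgue measure on ℝ³ restricted to the image Φ((0, T) × S²₊). -/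
/-!
Write `x ∈ ℝⁿ \ {0}` in polar coordinates `x = r • ω` and replace the radius by the time
`t = rⁿ / n`; since `dt = rⁿ⁻¹ dr`, Lebesgue measure becomes `dt dσ(ω)`. In these coordinates
`(t, ω) ↦ ε • ω + t • V` is the map `G x = (ε / ‖x‖) • x + (‖x‖ⁿ / n) • V` on `ℝⁿ`, whose
differential is `ε / ‖x‖` times a rank-one perturbation of the identity, so by the matrix
determinant lemma its Jacobian is `εⁿ⁻¹ ⟪x / ‖x‖, V⟫`. The change of variables formula for `G`
gives the claim. Injectivity: if `ε • ω₁ + t₁ • V = ε • ω₂ + t₂ • V`, pairing with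
`ω₁ + ω₂ ⊥ ω₁ - ω₂` gives `(t₁ - t₂) ⟪ω₁ + ω₂, V⟫ = 0`, and `⟪ω₁ + ω₂, V⟫ > 0`.
-/

open MeasureTheory Metric Set Module
open scoped RealInnerProductSpace ENNReal

theorem MeasureTheory.Measure.map_withDensity_comp {α β : Type*} [MeasurableSpace α]
    [MeasurableSpace β] {f : α → β} (hf : Measurable f) (μ : Measure α) {g : β → ℝ≥0∞}
    (hg : Measurable g) : (μ.withDensity fun a => g (f a)).map f = (μ.map f).withDensity g := by
  ext s hs
  rw [Measure.map_apply hf hs, withDensity_apply _ hs, withDensity_apply _ (hf hs),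
    setLIntegral_map hs hg hf]

theorem image_pow_div_Ioi {n : ℕ} (hn : n ≠ 0) :
    (fun r : ℝ => r ^ n / n) '' Ioi 0 = Ioi 0 := by
  have hn' : (0 : ℝ) < n := by positivity
  refine (image_subset_iff.2 fun r (hr : 0 < r) => ?_).antisymm fun t (ht : 0 < t) => ?_
  · exact div_pos (pow_pos hr n) hn'
  refine ⟨(n * t) ^ (n⁻¹ : ℝ), Real.rpow_pos_of_pos (by positivity) _, ?_⟩
  dsimp only
  rw [Real.rpow_inv_natCast_pow (by positivity) hn]
  field_simp

theorem injOn_pow_div_Ioi {n : ℕ} (hn : n ≠ 0) : InjOn (fun r : ℝ => r ^ n / n) (Ioi 0) := by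
  intro r (hr : 0 < r) s (hs : 0 < s) h
  have hn' : (n : ℝ) ≠ 0 := Nat.cast_ne_zero.2 hn
  exact (pow_left_inj₀ hr.le hs.le hn).1 (by simpa [hn'] using h)

/-- With `t = rⁿ / n` one has `dt = rⁿ⁻¹ dr`, the radial factor of Lebesgue measure in polar
coordinates. -/
noncomputable def radiusToTime (n : ℕ) (r : Ioi (0 : ℝ)) : ℝ := (r : ℝ) ^ n / n

theorem injective_radiusToTime {n : ℕ} (hn : n ≠ 0) : Function.Injective (radiusToTime n) :=
  fun r s h => Subtype.ext (injOn_pow_div_Ioi hn r.2 s.2 h)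

theorem range_radiusToTime {n : ℕ} (hn : n ≠ 0) : range (radiusToTime n) = Ioi 0 := by
  rw [show radiusToTime n = (fun r : ℝ => r ^ n / n) ∘ Subtype.val from rfl, range_comp,
    Subtype.range_coe, image_pow_div_Ioi hn]

theorem image_radiusToTime_swap_prod {X : Type*} (S : Set X) {n : ℕ} (hn : n ≠ 0) {I : Set ℝ}
    (hI0 : I ⊆ Ioi 0) :
    (fun q : X × Ioi (0 : ℝ) => (radiusToTime n q.2, q.1)) '' (S ×ˢ (radiusToTime n ⁻¹' I))
      = I ×ˢ S := by
  rw [show (fun q : X × Ioi (0 : ℝ) => (radiusToTime n q.2, q.1))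
      = Prod.map (radiusToTime n) id ∘ Prod.swap from rfl, image_comp, image_swap_prod,
    prodMap_image_prod, image_id, image_preimage_eq_of_subset (by rwa [range_radiusToTime hn])]

namespace MeasureTheory.Measure

theorem map_volumeIoiPow_radiusToTime {n : ℕ} (hn : n ≠ 0) :
    (volumeIoiPow (n - 1)).map (radiusToTime n) = volume.restrict (Ioi 0) := by
  have hval : (volumeIoiPow (n - 1)).map Subtype.val
      = (volume.restrict (Ioi 0)).withDensity fun r => ENNReal.ofReal (r ^ (n - 1)) := by
    rw [volumeIoiPow, Measure.map_withDensity_comp (g := fun r : ℝ => ENNReal.ofReal (r ^ (n - 1)))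
      measurable_subtype_coe _ (by fun_prop),
      map_comap_subtype_coe measurableSet_Ioi]
  have hderiv : ∀ r ∈ Ioi (0 : ℝ), HasFDerivWithinAt (fun r : ℝ => r ^ n / n)
      ((1 : ℝ →L[ℝ] ℝ).smulRight (r ^ (n - 1))) (Ioi 0) r := by
    intro r _
    have hn' : (n : ℝ) ≠ 0 := Nat.cast_ne_zero.2 hn
    refine HasDerivAt.hasFDerivAt ?_ |>.hasFDerivWithinAt
    exact ((hasDerivAt_pow n r).div_const (n : ℝ)).congr_deriv (by field_simp)
  have hmap : (volumeIoiPow (n - 1)).map (radiusToTime n)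
      = ((volumeIoiPow (n - 1)).map Subtype.val).map (fun r : ℝ => r ^ n / n) :=
    (Measure.map_map (g := fun r : ℝ => r ^ n / n) (by fun_prop) measurable_subtype_coe).symm
  have hdens : (fun r : ℝ => ENNReal.ofReal (r ^ (n - 1))) =ᵐ[volume.restrict (Ioi 0)]
      fun r => ENNReal.ofReal |((1 : ℝ →L[ℝ] ℝ).smulRight (r ^ (n - 1))).det| :=
    ae_restrict_of_forall_mem measurableSet_Ioi fun r (hr : 0 < r) => by
      simp [abs_of_pos (pow_pos hr _)]
  rw [hmap, hval, withDensity_congr_ae hdens,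
    map_withDensity_abs_det_fderiv_eq_addHaar volume measurableSet_Ioi.nullMeasurableSet hderiv
      (injOn_pow_div_Ioi hn), image_pow_div_Ioi hn]

theorem volume_restrict_prod_eq_map_radiusToTime {X : Type*} [MeasurableSpace X] (σ : Measure X)
    [SFinite σ] (S : Set X) {n : ℕ} (hn : n ≠ 0) {I : Set ℝ} (hI : MeasurableSet I)
    (hI0 : I ⊆ Ioi 0) :
    (volume.restrict I).prod (σ.restrict S)
      = ((σ.prod (volumeIoiPow (n - 1))).restrict (S ×ˢ (radiusToTime n ⁻¹' I))).map
        fun q => (radiusToTime n q.2, q.1) := by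
  set τ := radiusToTime n
  have hτ : Measurable τ := by unfold τ radiusToTime; fun_prop
  have htime : volume.restrict I = ((volumeIoiPow (n - 1)).restrict (τ ⁻¹' I)).map τ := by
    rw [← Measure.restrict_map hτ hI, map_volumeIoiPow_radiusToTime hn,
      Measure.restrict_restrict_of_subset hI0]
  rw [htime, ← Measure.prod_restrict, ← Measure.map_id (μ := σ.restrict S),
    Measure.map_prod_map _ _ hτ measurable_id, ← Measure.prod_swap,
    Measure.map_map (hτ.prodMap measurable_id) measurable_swap, Measure.map_id]
  rfl

end MeasureTheory.Measure

section Polar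

variable {E : Type*} [NormedAddCommGroup E] [NormedSpace ℝ E] [MeasurableSpace E] [BorelSpace E]

theorem measurableEmbedding_smul_sphere_Ioi :
    MeasurableEmbedding fun p : sphere (0 : E) 1 × Ioi (0 : ℝ) => (p.2 : ℝ) • (p.1 : E) := by
  have hQ : (fun p : sphere (0 : E) 1 × Ioi (0 : ℝ) => (p.2 : ℝ) • (p.1 : E))
      = Subtype.val ∘ (homeomorphUnitSphereProd E).symm := by
    ext p; simp
  rw [hQ]
  exact (MeasurableEmbedding.subtype_coe (measurableSet_singleton 0).compl).comp
    (homeomorphUnitSphereProd E).symm.measurableEmbedding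

variable [FiniteDimensional ℝ E] (μ : Measure E) [μ.IsAddHaarMeasure]

theorem map_smul_toSphere_prod_volumeIoiPow_restrict (A : Set (sphere (0 : E) 1 × Ioi (0 : ℝ))) :
    ((μ.toSphere.prod (Measure.volumeIoiPow (finrank ℝ E - 1))).restrict A).map
        (fun p => (p.2 : ℝ) • (p.1 : E))
      = μ.restrict ((fun p => (p.2 : ℝ) • (p.1 : E)) '' A) := by
  have hemb := measurableEmbedding_smul_sphere_Ioi (E := E)
  have hpolar : (μ.toSphere.prod (Measure.volumeIoiPow (finrank ℝ E - 1))).map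
      (fun p => (p.2 : ℝ) • (p.1 : E)) = μ.restrict {0}ᶜ := by
    set e := homeomorphUnitSphereProd E
    have hval := MeasurableEmbedding.subtype_coe (measurableSet_singleton (0 : E)).compl
    rw [show (fun p : sphere (0 : E) 1 × Ioi (0 : ℝ) => (p.2 : ℝ) • (p.1 : E))
        = Subtype.val ∘ e.symm by ext p; simp [e],
      ← μ.measurePreserving_homeomorphUnitSphereProd.map_eq,
      Measure.map_map (hval.measurable.comp e.symm.measurable) e.measurable, Function.comp_assoc,
      e.symm_comp_self, Function.comp_id, hval.map_comap, Subtype.range_coe]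
  have hsub : (fun p => (p.2 : ℝ) • (p.1 : E)) '' A ⊆ {0}ᶜ := by
    rintro _ ⟨⟨ω, r⟩, -, rfl⟩
    exact smul_ne_zero r.2.ne' (ne_zero_of_mem_unit_sphere ω)
  rw [← Measure.restrict_restrict_of_subset hsub, ← hpolar, hemb.restrict_map,
    hemb.injective.preimage_image]

end Polar

section InnerProductSpace

variable {E : Type*} [NormedAddCommGroup E] [InnerProductSpace ℝ E]

theorem hasFDerivAt_norm {x : E} (hx : x ≠ 0) :
    HasFDerivAt (fun y : E => ‖y‖) (‖x‖⁻¹ • innerSL ℝ x) x := by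
  have hx' : 0 < ‖x‖ := norm_pos_iff.2 hx
  have hsqrt : HasDerivAt Real.sqrt (1 / (2 * ‖x‖)) (‖x‖ ^ 2) := by
    simpa [Real.sqrt_sq hx'.le] using Real.hasDerivAt_sqrt (pow_pos hx' 2).ne'
  have hnorm : (fun y : E => ‖y‖) = Real.sqrt ∘ fun y => ‖y‖ ^ 2 := by
    ext y; simp
  rw [hnorm]
  refine (hsqrt.comp_hasFDerivAt x (hasFDerivAt_id x).norm_sq).congr_fderiv ?_
  ext y
  simp only [one_div, mul_inv_rev, id_eq, ContinuousLinearMap.comp_id, smul_apply,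
    coe_innerSL_apply, nsmul_eq_mul, Nat.cast_ofNat, smul_eq_mul]
  field_simp

theorem ContinuousLinearMap.det_id_add_innerSL_smulRight [FiniteDimensional ℝ E] (x w : E) :
    (ContinuousLinearMap.id ℝ E + (innerSL ℝ x).smulRight w).det = 1 + ⟪x, w⟫ := by
  let b := stdOrthonormalBasis ℝ E
  have hM : LinearMap.toMatrix b.toBasis b.toBasis
      (ContinuousLinearMap.id ℝ E + (innerSL ℝ x).smulRight w : E →L[ℝ] E)
      = 1 + Matrix.replicateCol (Fin 1) (b.repr w) * Matrix.replicateRow (Fin 1) (b.repr x) := by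
    ext i j
    simp [LinearMap.toMatrix_apply, Matrix.mul_apply, Matrix.one_apply, b.repr_apply_apply,
      real_inner_comm, mul_comm]
  rw [ContinuousLinearMap.det, ← LinearMap.det_toMatrix b.toBasis, hM]
  refine (Matrix.det_one_add_replicateCol_mul_replicateRow _ _).trans ?_
  simp only [dotProduct, b.repr_apply_apply]
  simp only [real_inner_comm x, b.sum_inner_mul_inner x w]

def creationMap (ε : ℝ) (V : E) (p : ℝ × sphere (0 : E) 1) : E := ε • (p.2 : E) + p.1 • V

theorem injOn_creationMap {ε : ℝ} (hε : ε ≠ 0) (V : E) :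
    InjOn (creationMap ε V) (univ ×ˢ {ω : sphere (0 : E) 1 | 0 < ⟪(ω : E), V⟫}) := by
  rintro ⟨t₁, ω₁⟩ ⟨-, hω₁⟩ ⟨t₂, ω₂⟩ ⟨-, hω₂⟩ h
  have hdiff : ε • ((ω₁ : E) - ω₂) = (t₂ - t₁) • V := by
    simp only [creationMap] at h
    rw [smul_sub, sub_smul, sub_eq_sub_iff_add_eq_add, add_comm (t₂ • V), h]
  have hperp : ⟪(ω₁ : E) + ω₂, (ω₁ : E) - ω₂⟫ = 0 := by
    rw [inner_sub_right, inner_add_left, inner_add_left, real_inner_self_eq_norm_sq,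
      real_inner_self_eq_norm_sq, norm_eq_of_mem_sphere, norm_eq_of_mem_sphere,
      real_inner_comm (ω₂ : E)]
    ring
  have ht : t₁ = t₂ := by
    have hpos : 0 < ⟪(ω₁ : E) + ω₂, V⟫ := by
      rw [inner_add_left]; exact add_pos hω₁ hω₂
    have := congrArg (⟪(ω₁ : E) + ω₂, ·⟫) hdiff
    simp only [real_inner_smul_right, hperp, mul_zero] at this
    nlinarith
  subst ht
  rw [sub_self, zero_smul, smul_eq_zero_iff_right hε, sub_eq_zero] at hdiff
  exact Prod.ext rfl (Subtype.ext hdiff)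

noncomputable def radialCreationMap (n : ℕ) (ε : ℝ) (V : E) (x : E) : E :=
  (ε / ‖x‖) • x + (‖x‖ ^ n / n) • V

theorem radialCreationMap_smul (n : ℕ) (ε : ℝ) (V : E) (r : Ioi (0 : ℝ))
    (ω : sphere (0 : E) 1) :
    radialCreationMap n ε V ((r : ℝ) • (ω : E)) = creationMap ε V (radiusToTime n r, ω) := by
  have hr : (0 : ℝ) < r := r.2
  simp [radialCreationMap, creationMap, radiusToTime, norm_smul, abs_of_pos hr, smul_smul, hr.ne']

theorem exists_smul_sphere_of_inner_pos {V x : E} (hx : 0 < ⟪x, V⟫) :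
    ∃ (r : Ioi (0 : ℝ)) (ω : sphere (0 : E) 1), (r : ℝ) • (ω : E) = x ∧ 0 < ⟪(ω : E), V⟫ := by
  have hx0 : x ≠ 0 := by rintro rfl; simp at hx
  have hr : 0 < ‖x‖ := norm_pos_iff.2 hx0
  refine ⟨⟨‖x‖, hr⟩, ⟨‖x‖⁻¹ • x, by simp [norm_smul, hr.ne']⟩, by simp [smul_smul, hr.ne'], ?_⟩
  simpa only [real_inner_smul_left] using mul_pos (inv_pos.2 hr) hx

theorem injOn_radialCreationMap {n : ℕ} (hn : n ≠ 0) {ε : ℝ} (hε : ε ≠ 0) (V : E) :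
    InjOn (radialCreationMap n ε V) {x | 0 < ⟪x, V⟫} := by
  intro x hx y hy h
  obtain ⟨r, ω, rfl, hω⟩ := exists_smul_sphere_of_inner_pos hx
  obtain ⟨s, ω', rfl, hω'⟩ := exists_smul_sphere_of_inner_pos hy
  rw [radialCreationMap_smul, radialCreationMap_smul] at h
  obtain ⟨hrs, hωω'⟩ := Prod.mk_inj.1
    (injOn_creationMap hε V (mk_mem_prod (mem_univ _) hω) (mk_mem_prod (mem_univ _) hω') h)
  rw [injective_radiusToTime hn hrs, hωω']

theorem hasFDerivAt_radialCreationMap {n : ℕ} (hn : n ≠ 0) (ε : ℝ) (V : E) {x : E} (hx : x ≠ 0) :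
    HasFDerivAt (radialCreationMap n ε V)
      ((ε / ‖x‖) • ContinuousLinearMap.id ℝ E +
        (innerSL ℝ x).smulRight ((-ε / ‖x‖ ^ 3) • x + (‖x‖ ^ n / ‖x‖ ^ 2) • V)) x := by
  have hx' : ‖x‖ ≠ 0 := norm_ne_zero_iff.2 hx
  have hnorm := hasFDerivAt_norm hx
  have hcoef := ((hasDerivAt_inv hx').comp_hasFDerivAt x hnorm).const_mul ε
  have hpow := (hnorm.pow n).mul_const (n : ℝ)⁻¹
  refine ((hcoef.smul (hasFDerivAt_id x)).add (hpow.smul_const V)).congr_fderiv ?_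
  ext y
  obtain ⟨k, rfl⟩ := Nat.exists_eq_add_one_of_ne_zero hn
  simp only [Function.comp_apply, neg_smul, smul_neg, id_eq, Nat.cast_add, Nat.cast_one,
    add_tsub_cancel_right, nsmul_eq_mul, add_apply, smul_apply, ContinuousLinearMap.id_apply,
    ContinuousLinearMap.smulRight_apply, neg_apply, coe_innerSL_apply, smul_eq_mul, smul_add]
  match_scalars <;> field_simp
  ring

theorem det_fderiv_radialCreationMap [FiniteDimensional ℝ E] [Nontrivial E] {ε : ℝ} (hε : ε ≠ 0)
    (V : E) {x : E} (hx : x ≠ 0) :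
    (fderiv ℝ (radialCreationMap (finrank ℝ E) ε V) x).det
      = ε ^ (finrank ℝ E - 1) * (⟪x, V⟫ / ‖x‖) := by
  obtain ⟨k, hk⟩ := Nat.exists_eq_add_one_of_ne_zero (finrank_pos (R := ℝ) (M := E)).ne'
  rw [(hasFDerivAt_radialCreationMap finrank_pos.ne' ε V hx).fderiv]
  set c := ε / ‖x‖
  set w := (-ε / ‖x‖ ^ 3) • x + (‖x‖ ^ finrank ℝ E / ‖x‖ ^ 2) • V
  have hx' : ‖x‖ ≠ 0 := norm_ne_zero_iff.2 hx
  have hc : c ≠ 0 := div_ne_zero hε hx'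
  have hA : c • ContinuousLinearMap.id ℝ E + (innerSL ℝ x).smulRight w
      = c • (ContinuousLinearMap.id ℝ E + (innerSL ℝ x).smulRight (c⁻¹ • w)) := by
    ext y; simp [smul_smul, mul_left_comm c, hc]
  rw [hA, ContinuousLinearMap.det, ContinuousLinearMap.toLinearMap_smul, LinearMap.det_smul,
    ← ContinuousLinearMap.det, ContinuousLinearMap.det_id_add_innerSL_smulRight, hk]
  simp only [div_pow, inv_div, hk, smul_add, inner_add_right, real_inner_smul_right,
    real_inner_self_eq_norm_sq, add_tsub_cancel_right, c, w]
  field_simp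
  ring

end InnerProductSpace

section Creation

variable {E : Type*} [NormedAddCommGroup E] [InnerProductSpace ℝ E] [FiniteDimensional ℝ E]
  [Nontrivial E] [MeasurableSpace E] [BorelSpace E] (μ : Measure E) [μ.IsAddHaarMeasure]

theorem map_radialCreationMap_withDensity {ε : ℝ} (hε : 0 < ε) (V : E) {U : Set E}
    (hU : MeasurableSet U) (hUV : U ⊆ {x | 0 < ⟪x, V⟫}) :
    ((μ.restrict U).withDensity fun x =>
        ENNReal.ofReal (ε ^ (finrank ℝ E - 1) * (⟪x, V⟫ / ‖x‖))).map
      (radialCreationMap (finrank ℝ E) ε V)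
      = μ.restrict (radialCreationMap (finrank ℝ E) ε V '' U) := by
  have hU0 : ∀ x ∈ U, x ≠ 0 := fun x hx h0 => by simpa [h0] using hUV hx
  have hdens : (fun x => ENNReal.ofReal (ε ^ (finrank ℝ E - 1) * (⟪x, V⟫ / ‖x‖)))
      =ᵐ[μ.restrict U]
        fun x => ENNReal.ofReal |(fderiv ℝ (radialCreationMap (finrank ℝ E) ε V) x).det| :=
    ae_restrict_of_forall_mem hU fun x hx => by
      have hxV : 0 < ⟪x, V⟫ := hUV hx
      have hx0 : 0 < ‖x‖ := norm_pos_iff.2 (hU0 x hx)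
      dsimp only
      rw [det_fderiv_radialCreationMap hε.ne' V (hU0 x hx), abs_of_pos (by positivity)]
  rw [withDensity_congr_ae hdens]
  exact map_withDensity_abs_det_fderiv_eq_addHaar μ hU.nullMeasurableSet
    (fun x hx => (hasFDerivAt_radialCreationMap finrank_pos.ne' ε V (hU0 x hx)).differentiableAt
      |>.hasFDerivAt.hasFDerivWithinAt)
    ((injOn_radialCreationMap finrank_pos.ne' hε.ne' V).mono hUV)

theorem map_creationMap_withDensity {ε : ℝ} (hε : 0 < ε) (V : E) {I : Set ℝ}
    (hI : MeasurableSet I) (hI0 : I ⊆ Ioi 0) :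
    (((volume.restrict I).prod
        (μ.toSphere.restrict {ω : sphere (0 : E) 1 | 0 < ⟪(ω : E), V⟫})).withDensity
        fun p => ENNReal.ofReal (ε ^ (finrank ℝ E - 1) * ⟪(p.2 : E), V⟫)).map (creationMap ε V)
      = μ.restrict (creationMap ε V '' (I ×ˢ {ω : sphere (0 : E) 1 | 0 < ⟪(ω : E), V⟫})) := by
  set n := finrank ℝ E
  have hn : n ≠ 0 := finrank_pos.ne'
  set S := {ω : sphere (0 : E) 1 | 0 < ⟪(ω : E), V⟫}
  set F := fun q : sphere (0 : E) 1 × Ioi (0 : ℝ) => (radiusToTime n q.2, q.1)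
  set Q := fun q : sphere (0 : E) 1 × Ioi (0 : ℝ) => (q.2 : ℝ) • (q.1 : E)
  set A := S ×ˢ (radiusToTime n ⁻¹' I)
  set G := radialCreationMap n ε V
  have hQ : MeasurableEmbedding Q := measurableEmbedding_smul_sphere_Ioi
  have hA : MeasurableSet A := (measurableSet_lt measurable_const (by fun_prop)).prod
    ((by unfold radiusToTime; fun_prop : Measurable (radiusToTime n)) hI)
  have hGQ : G ∘ Q = creationMap ε V ∘ F := funext fun q => radialCreationMap_smul n ε V q.2 q.1
  have hUV : Q '' A ⊆ {x | 0 < ⟪x, V⟫} := by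
    rintro _ ⟨⟨ω, r⟩, ⟨hω : 0 < ⟪(ω : E), V⟫, -⟩, rfl⟩
    show 0 < ⟪(r : ℝ) • (ω : E), V⟫
    exact (real_inner_smul_left (ω : E) V r).symm ▸ mul_pos r.2 hω
  have hρ : (fun q => ENNReal.ofReal (ε ^ (n - 1) * ⟪((F q).2 : E), V⟫))
      = fun q => ENNReal.ofReal (ε ^ (n - 1) * (⟪Q q, V⟫ / ‖Q q‖)) := by
    ext ⟨ω, r⟩
    have hr : (0 : ℝ) < r := r.2
    simp [F, Q, norm_smul, real_inner_smul_left, abs_of_pos hr, hr.ne']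
  calc _ = ((((μ.toSphere.prod (Measure.volumeIoiPow (n - 1))).restrict A).map F).withDensity
          fun p => ENNReal.ofReal (ε ^ (n - 1) * ⟪(p.2 : E), V⟫)).map (creationMap ε V) := by
        rw [Measure.volume_restrict_prod_eq_map_radiusToTime _ _ hn hI hI0]
    _ = (((μ.toSphere.prod (Measure.volumeIoiPow (n - 1))).restrict A).withDensity
          fun q => ENNReal.ofReal (ε ^ (n - 1) * (⟪Q q, V⟫ / ‖Q q‖))).map (G ∘ Q) := by
        rw [← Measure.map_withDensity_comp (by unfold F radiusToTime; fun_prop) _ (by fun_prop),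
          Measure.map_map (by unfold creationMap; fun_prop) (by unfold F radiusToTime; fun_prop),
          hρ, hGQ]
    _ = ((μ.restrict (Q '' A)).withDensity
          fun x => ENNReal.ofReal (ε ^ (n - 1) * (⟪x, V⟫ / ‖x‖))).map G := by
        rw [← Measure.map_map (by unfold G radialCreationMap; fun_prop) hQ.measurable,
          Measure.map_withDensity_comp (f := Q)
            (g := fun x => ENNReal.ofReal (ε ^ (n - 1) * (⟪x, V⟫ / ‖x‖))) hQ.measurable _
            (by fun_prop),
          map_smul_toSphere_prod_volumeIoiPow_restrict]
    _ = μ.restrict (G '' (Q '' A)) :=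
        map_radialCreationMap_withDensity μ hε V (hQ.measurableSet_image.2 hA) hUV
    _ = _ := by rw [← image_comp, hGQ, image_comp, image_radiusToTime_swap_prod S hn hI0]

end Creation

theorem creation_change_of_variables_general
    (V : EuclideanSpace ℝ (Fin 3)) (ε T : ℝ) (hε : 0 < ε) :
    Set.InjOn
        (fun p : ℝ × sphere (0 : EuclideanSpace ℝ (Fin 3)) 1 =>
          ε • (p.2 : EuclideanSpace ℝ (Fin 3)) + p.1 • V)
        (Set.Ioo 0 T ×ˢ {ω : sphere (0 : EuclideanSpace ℝ (Fin 3)) 1 |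
          0 < ⟪(ω : EuclideanSpace ℝ (Fin 3)), V⟫}) ∧
    Measure.map
        (fun p : ℝ × sphere (0 : EuclideanSpace ℝ (Fin 3)) 1 =>
          ε • (p.2 : EuclideanSpace ℝ (Fin 3)) + p.1 • V)
        (((volume.restrict (Set.Ioo 0 T)).prod
            (((volume : Measure (EuclideanSpace ℝ (Fin 3))).toSphere).restrict
              {ω : sphere (0 : EuclideanSpace ℝ (Fin 3)) 1 |
                0 < ⟪(ω : EuclideanSpace ℝ (Fin 3)), V⟫})).withDensity
          (fun p => ENNReal.ofReal
            (ε ^ 2 * ⟪(p.2 : EuclideanSpace ℝ (Fin 3)), V⟫)))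
      = volume.restrict
          ((fun p : ℝ × sphere (0 : EuclideanSpace ℝ (Fin 3)) 1 =>
              ε • (p.2 : EuclideanSpace ℝ (Fin 3)) + p.1 • V) ''
            (Set.Ioo 0 T ×ˢ {ω : sphere (0 : EuclideanSpace ℝ (Fin 3)) 1 |
              0 < ⟪(ω : EuclideanSpace ℝ (Fin 3)), V⟫})) := by
  refine ⟨(injOn_creationMap hε.ne' V).mono (prod_mono (subset_univ _) subset_rfl), ?_⟩
  have h := map_creationMap_withDensity volume hε V (measurableSet_Ioo (a := 0) (b := T))
    fun _ ht => ht.1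
  rwa [finrank_euclideanSpace_fin] at h

/-- Change of variables for one creation in the backward collision expansion:
for `V ≠ 0`, `ε > 0`, `T > 0`, the map `Φ(t, ω) = εω + tV` is injective on
`(0, T) × S²₊`, and the pushforward under `Φ` of the measure
`ε² (ω·V) dt dσ(ω)` on `(0, T) × S²₊` equals the Lebesgue measure on `ℝ³`
restricted to the image `Φ((0, T) × S²₊)`. Here `σ` is the surface measure
on the unit sphere `S²` of `ℝ³`. -/
theorem creation_change_of_variables
    (V : EuclideanSpace ℝ (Fin 3)) (hV : V ≠ 0) (ε T : ℝ) (hε : 0 < ε) (hT : 0 < T) :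
    Set.InjOn
        (fun p : ℝ × sphere (0 : EuclideanSpace ℝ (Fin 3)) 1 =>
          ε • (p.2 : EuclideanSpace ℝ (Fin 3)) + p.1 • V)
        (Set.Ioo 0 T ×ˢ {ω : sphere (0 : EuclideanSpace ℝ (Fin 3)) 1 |
          0 < ⟪(ω : EuclideanSpace ℝ (Fin 3)), V⟫}) ∧
    Measure.map
        (fun p : ℝ × sphere (0 : EuclideanSpace ℝ (Fin 3)) 1 =>
          ε • (p.2 : EuclideanSpace ℝ (Fin 3)) + p.1 • V)
        (((volume.restrict (Set.Ioo 0 T)).prod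
            (((volume : Measure (EuclideanSpace ℝ (Fin 3))).toSphere).restrict
              {ω : sphere (0 : EuclideanSpace ℝ (Fin 3)) 1 |
                0 < ⟪(ω : EuclideanSpace ℝ (Fin 3)), V⟫})).withDensity
          (fun p => ENNReal.ofReal
            (ε ^ 2 * ⟪(p.2 : EuclideanSpace ℝ (Fin 3)), V⟫)))
      = volume.restrict
          ((fun p : ℝ × sphere (0 : EuclideanSpace ℝ (Fin 3)) 1 =>
              ε • (p.2 : EuclideanSpace ℝ (Fin 3)) + p.1 • V) ''
            (Set.Ioo 0 T ×ˢ {ω : sphere (0 : EuclideanSpace ℝ (Fin 3)) 1 |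
              0 < ⟪(ω : EuclideanSpace ℝ (Fin 3)), V⟫})) :=
  creation_change_of_variables_general V ε T hε
end
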